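/- arXiv:2304.11336 — 7 statements merged into one kernel-verified Lean document; each statement's English description precedes it below -/
import Mathlib

section
/- Let P and Q be probability measures on a measurable space X, let ε ≥ 0 and δ ∈ [0,1], and define f_{ε,δ}(α) = max{0, 1 − δ − e^ε·α, e^{−ε}·(1 − δ − α)} for α ∈ [0,1]. Then P and Q are (ε,δ)-indistinguishable (i.e. for all measurable sets S ⊆ X, P(S) ≤ e^ε·Q(S) + δ and Q(S) ≤ e^ε·P(S) + δ) if and only if for every measurable rejection rule φ : X → [0,1], the type II error β_φ = 1 − ∫ φ dQ satisfies β_φ ≥ f_{ε,δ}(α_φ), where α_φ = ∫ φ dP is the type I error. -/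
/-!
Testing with a rejection rule φ is the same as testing with the sets `{φ ≥ t}`: by the layer-cake
formula `∫ φ dμ = ∫₀¹ μ {t ≤ φ} dt`, so the set inequalities `Q S ≤ e^ε P S + δ` integrate to
`∫ φ dQ ≤ e^ε ∫ φ dP + δ`, and, applied to `1 - φ` with `P` and `Q` swapped, to
`1 - ∫ φ dP ≤ e^ε (1 - ∫ φ dQ) + δ`. Together with `∫ φ dQ ≤ 1` these are exactly the three
lower bounds on `1 - ∫ φ dQ` whose maximum is `f_{ε,δ}(∫ φ dP)`. Conversely, the indicators of
`S` and `Sᶜ` are rejection rules, and they give back the two set inequalities.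
-/

open MeasureTheory Set

lemma max_tradeoff_le_iff (ε δ a b : ℝ) :
    max 0 (max (1 - δ - Real.exp ε * a) (Real.exp (-ε) * (1 - δ - a))) ≤ 1 - b ↔
      b ≤ 1 ∧ b ≤ Real.exp ε * a + δ ∧ 1 - a ≤ Real.exp ε * (1 - b) + δ := by
  have hexp : Real.exp (-ε) * Real.exp ε = 1 := by rw [← Real.exp_add, neg_add_cancel, Real.exp_zero]
  have hscale : Real.exp (-ε) * (1 - δ - a) ≤ 1 - b ↔ 1 - δ - a ≤ Real.exp ε * (1 - b) := by
    rw [← mul_le_mul_iff_of_pos_left (Real.exp_pos ε), ← mul_assoc, mul_comm (Real.exp ε), hexp,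
      one_mul]
  simp only [max_le_iff, hscale]
  constructor <;> rintro ⟨h₁, h₂, h₃⟩ <;> refine ⟨?_, ?_, ?_⟩ <;> linarith

section LayerCake

variable {X : Type*} [MeasurableSpace X] {μ ν : Measure X} [IsFiniteMeasure μ] [IsFiniteMeasure ν]
  {φ : X → ℝ}

lemma integrableOn_measureReal_le_Ioc_zero_one :
    IntegrableOn (fun t : ℝ => μ.real {x | t ≤ φ x}) (Ioc 0 1) := by
  have hanti : Antitone (fun t : ℝ => μ.real {x | t ≤ φ x}) :=
    fun s t hst => measureReal_mono fun x hx => hst.trans hx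
  exact ((hanti.antitoneOn _).integrableOn_isCompact isCompact_Icc).mono_set Ioc_subset_Icc_self

lemma integral_eq_integral_Ioc_zero_one_measureReal_le (hφ : Measurable φ)
    (hφ01 : ∀ x, φ x ∈ Icc (0 : ℝ) 1) :
    ∫ x, φ x ∂μ = ∫ t in Ioc (0 : ℝ) 1, μ.real {x | t ≤ φ x} :=
  (Integrable.of_mem_Icc 0 1 hφ.aemeasurable (ae_of_all _ hφ01)).integral_eq_integral_Ioc_meas_le
    (ae_of_all _ fun x => (hφ01 x).1) (ae_of_all _ fun x => (hφ01 x).2)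

lemma integral_le_mul_integral_add_of_measureReal_le {c δ : ℝ}
    (h : ∀ S, MeasurableSet S → ν.real S ≤ c * μ.real S + δ) (hφ : Measurable φ)
    (hφ01 : ∀ x, φ x ∈ Icc (0 : ℝ) 1) :
    ∫ x, φ x ∂ν ≤ c * ∫ x, φ x ∂μ + δ := by
  have hconst : IntegrableOn (fun _ : ℝ => δ) (Ioc 0 1) := integrableOn_const (by simp) (by simp)
  calc ∫ x, φ x ∂ν = ∫ t in Ioc (0 : ℝ) 1, ν.real {x | t ≤ φ x} :=
        integral_eq_integral_Ioc_zero_one_measureReal_le hφ hφ01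
    _ ≤ ∫ t in Ioc (0 : ℝ) 1, (c * μ.real {x | t ≤ φ x} + δ) :=
        setIntegral_mono_on integrableOn_measureReal_le_Ioc_zero_one
          (integrableOn_measureReal_le_Ioc_zero_one.const_mul c |>.add hconst) measurableSet_Ioc
          fun t _ => h _ (measurableSet_le measurable_const hφ)
    _ = c * ∫ x, φ x ∂μ + δ := by
        rw [integral_add (integrableOn_measureReal_le_Ioc_zero_one.const_mul c) hconst,
          integral_const_mul, ← integral_eq_integral_Ioc_zero_one_measureReal_le hφ hφ01,
          setIntegral_const]
        simp

end LayerCake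

lemma one_sub_integral_le_mul_one_sub_integral_add {X : Type*} [MeasurableSpace X]
    {μ ν : Measure X} [IsProbabilityMeasure μ] [IsProbabilityMeasure ν] {c δ : ℝ}
    (h : ∀ S, MeasurableSet S → ν.real S ≤ c * μ.real S + δ) {φ : X → ℝ} (hφ : Measurable φ)
    (hφ01 : ∀ x, φ x ∈ Icc (0 : ℝ) 1) :
    1 - ∫ x, φ x ∂ν ≤ c * (1 - ∫ x, φ x ∂μ) + δ := by
  have hφint : ∀ ρ : Measure X, [IsProbabilityMeasure ρ] → ∫ x, (1 - φ x) ∂ρ = 1 - ∫ x, φ x ∂ρ :=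
    fun ρ _ => by
      rw [integral_sub (integrable_const 1) (.of_mem_Icc 0 1 hφ.aemeasurable (ae_of_all _ hφ01)),
        integral_const, probReal_univ, one_smul]
  rw [← hφint, ← hφint]
  exact integral_le_mul_integral_add_of_measureReal_le h (measurable_const.sub hφ)
    fun x => ⟨sub_nonneg.2 (hφ01 x).2, sub_le_self _ (hφ01 x).1⟩

theorem dp_iff_tradeoff_general {X : Type*} [MeasurableSpace X]
    (P Q : Measure X) [IsProbabilityMeasure P] [IsProbabilityMeasure Q]
    (ε δ : ℝ) :
    (∀ S : Set X, MeasurableSet S →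
        (P S).toReal ≤ Real.exp ε * (Q S).toReal + δ ∧
        (Q S).toReal ≤ Real.exp ε * (P S).toReal + δ) ↔
    (∀ φ : X → ℝ, Measurable φ → (∀ x, φ x ∈ Set.Icc (0 : ℝ) 1) →
      max 0 (max (1 - δ - Real.exp ε * ∫ x, φ x ∂P)
          (Real.exp (-ε) * (1 - δ - ∫ x, φ x ∂P)))
        ≤ 1 - ∫ x, φ x ∂Q) := by
  simp only [← measureReal_def, max_tradeoff_le_iff]
  constructor
  · intro hDP φ hφ hφ01
    refine ⟨?_, integral_le_mul_integral_add_of_measureReal_le (fun S hS => (hDP S hS).2) hφ hφ01,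
      one_sub_integral_le_mul_one_sub_integral_add (fun S hS => (hDP S hS).1) hφ hφ01⟩
    simpa using integral_mono_of_nonneg (ae_of_all Q fun x => (hφ01 x).1) (integrable_const 1)
      (ae_of_all _ fun x => (hφ01 x).2)
  · intro h S hS
    have hind : ∀ (T : Set X) x, T.indicator (1 : X → ℝ) x ∈ Icc (0 : ℝ) 1 :=
      fun T x => ⟨indicator_nonneg (fun _ _ => zero_le_one) x, indicator_le_self' (by simp) x⟩
    obtain ⟨-, hQS, -⟩ := h (S.indicator 1) (measurable_one.indicator hS) (hind S)
    obtain ⟨-, -, hPS⟩ := h (Sᶜ.indicator 1) (measurable_one.indicator hS.compl) (hind Sᶜ)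
    simp only [integral_indicator_one hS, integral_indicator_one hS.compl,
      probReal_compl_eq_one_sub hS] at hQS hPS
    constructor <;> linarith

/-- **(ε,δ)-DP is equivalent to domination by the trade-off function `f_{ε,δ}`.**
P and Q are (ε,δ)-indistinguishable iff every measurable rejection rule
φ : X → [0,1] has type II error β_φ = 1 − ∫ φ dQ at least
f_{ε,δ}(α_φ) = max{0, 1 − δ − e^ε·α_φ, e^{−ε}(1 − δ − α_φ)}, where α_φ = ∫ φ dP. -/
theorem dp_iff_tradeoff {X : Type*} [MeasurableSpace X]
    (P Q : Measure X) [IsProbabilityMeasure P] [IsProbabilityMeasure Q]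
    (ε δ : ℝ) (hε : 0 ≤ ε) (hδ0 : 0 ≤ δ) (hδ1 : δ ≤ 1) :
    (∀ S : Set X, MeasurableSet S →
        (P S).toReal ≤ Real.exp ε * (Q S).toReal + δ ∧
        (Q S).toReal ≤ Real.exp ε * (P S).toReal + δ) ↔
    (∀ φ : X → ℝ, Measurable φ → (∀ x, φ x ∈ Set.Icc (0 : ℝ) 1) →
      max 0 (max (1 - δ - Real.exp ε * ∫ x, φ x ∂P)
          (Real.exp (-ε) * (1 - δ - ∫ x, φ x ∂P)))
        ≤ 1 - ∫ x, φ x ∂Q) :=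
  dp_iff_tradeoff_general P Q ε δ
end

section
/- Let q₁, …, q_N and p be probability measures on a measurable space, with each qᵢ absolutely continuous with respect to p and KL(qᵢ‖p) < ∞, and let q_avg = (1/N)·Σᵢ qᵢ. Then (1/N)·Σᵢ KL(qᵢ‖p) = KL(q_avg‖p) + (1/N)·Σᵢ KL(qᵢ‖q_avg). -/
open MeasureTheory
open scoped ENNReal Classical

/-- The Kullback–Leibler divergence `KL(μ‖ν) = ∫ log(dμ/dν) dμ`, taking the
value `∞` when `μ` is not absolutely continuous w.r.t. `ν` or the
log-likelihood ratio is not integrable. -/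
noncomputable def klDiv {Ω : Type*} [MeasurableSpace Ω] (μ ν : Measure Ω) : ℝ≥0∞ :=
  if μ ≪ ν ∧ Integrable (llr μ ν) μ then ENNReal.ofReal (∫ x, llr μ ν x ∂μ) else ⊤

/-!
Since `q_avg ≥ qᵢ / N`, the density `dqᵢ/dq_avg` is bounded by `N`, so every `KL(qᵢ‖q_avg)` is
finite. Integrating the chain rule `log (dqᵢ/dp) = log (dqᵢ/dq_avg) + log (dq_avg/dp)` against `qᵢ`
and averaging over `i` gives the identity, because the average of the integrals of
`log (dq_avg/dp)` against the `qᵢ` is its integral against `q_avg`.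
-/

section LogLikelihoodRatio

variable {Ω : Type*} [MeasurableSpace Ω] {μ ν ξ : Measure Ω}

lemma MeasureTheory.Measure.rnDeriv_le_of_le_smul [SigmaFinite ν] {c : ℝ≥0∞} (h : μ ≤ c • ν) :
    μ.rnDeriv ν ≤ᵐ[ν] fun _ ↦ c := by
  refine ae_le_of_forall_setLIntegral_le_of_sigmaFinite (μ.measurable_rnDeriv ν) fun s _ _ ↦ ?_
  calc ∫⁻ x in s, μ.rnDeriv ν x ∂ν ≤ μ s := Measure.setLIntegral_rnDeriv_le s
    _ ≤ c * ν s := h s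
    _ = ∫⁻ _ in s, c ∂ν := by rw [setLIntegral_const]

/-- `llr μ ν` is integrable iff `x log x` of the density is, and the latter is bounded. -/
lemma integrable_llr_of_le_smul [IsFiniteMeasure μ] [IsFiniteMeasure ν] {c : ℝ≥0∞}
    (h : μ ≤ c • ν) (hc : c ≠ ∞) : Integrable (llr μ ν) μ := by
  rw [← integrable_rnDeriv_mul_log_iff (Measure.absolutelyContinuous_of_le_smul h)]
  obtain ⟨C, hC⟩ := (isCompact_Icc (a := 0) (b := c.toReal)).exists_bound_of_continuousOn
    Real.continuous_mul_log.continuousOn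
  refine Integrable.of_bound (by fun_prop) C ?_
  filter_upwards [Measure.rnDeriv_le_of_le_smul h] with x hx
  exact hC _ ⟨ENNReal.toReal_nonneg, ENNReal.toReal_mono hc hx⟩

lemma llr_chain_ae_eq [SigmaFinite μ] [SigmaFinite ν] [SigmaFinite ξ]
    (hμν : μ ≪ ν) (hνξ : ν ≪ ξ) :
    llr μ ξ =ᵐ[μ] fun x ↦ llr μ ν x + llr ν ξ x := by
  filter_upwards [(hμν.trans hνξ).ae_le (Measure.rnDeriv_mul_rnDeriv hμν),
    Measure.rnDeriv_pos hμν, hμν.ae_le (Measure.rnDeriv_pos hνξ),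
    hμν.ae_le (Measure.rnDeriv_lt_top μ ν),
    (hμν.trans hνξ).ae_le (Measure.rnDeriv_lt_top ν ξ)] with x hx hμν_pos hνξ_pos hμν_lt hνξ_lt
  rw [llr, llr, llr, ← hx, Pi.mul_apply, ENNReal.toReal_mul,
    Real.log_mul (ENNReal.toReal_pos hμν_pos.ne' hμν_lt.ne).ne'
      (ENNReal.toReal_pos hνξ_pos.ne' hνξ_lt.ne).ne']

lemma integrable_llr_of_chain [SigmaFinite μ] [SigmaFinite ν] [SigmaFinite ξ]
    (hμν : μ ≪ ν) (hνξ : ν ≪ ξ) (hμξ_int : Integrable (llr μ ξ) μ)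
    (hμν_int : Integrable (llr μ ν) μ) : Integrable (llr ν ξ) μ :=
  (hμξ_int.sub hμν_int).congr <| (llr_chain_ae_eq hμν hνξ).mono fun x hx ↦ by
    simp only [Pi.sub_apply, hx]
    ring

lemma integral_llr_chain [SigmaFinite μ] [SigmaFinite ν] [SigmaFinite ξ]
    (hμν : μ ≪ ν) (hνξ : ν ≪ ξ) (hμν_int : Integrable (llr μ ν) μ)
    (hνξ_int : Integrable (llr ν ξ) μ) :
    ∫ x, llr μ ξ x ∂μ = ∫ x, llr μ ν x ∂μ + ∫ x, llr ν ξ x ∂μ := by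
  rw [integral_congr_ae (llr_chain_ae_eq hμν hνξ), integral_add hμν_int hνξ_int]

lemma integral_llr_nonneg [IsProbabilityMeasure μ] [IsProbabilityMeasure ν] (hμν : μ ≪ ν)
    (h_int : Integrable (llr μ ν) μ) : 0 ≤ ∫ x, llr μ ν x ∂μ := by
  simpa using InformationTheory.integral_llr_add_sub_measure_univ_nonneg hμν h_int

lemma klDiv_of_ac_of_integrable (hμν : μ ≪ ν) (h_int : Integrable (llr μ ν) μ) :
    klDiv μ ν = ENNReal.ofReal (∫ x, llr μ ν x ∂μ) :=
  if_pos ⟨hμν, h_int⟩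

lemma absolutelyContinuous_of_klDiv_lt_top (h : klDiv μ ν < ∞) : μ ≪ ν := by
  by_contra hμν
  simp [klDiv, hμν] at h

lemma integrable_llr_of_klDiv_lt_top (h : klDiv μ ν < ∞) : Integrable (llr μ ν) μ := by
  by_contra h_int
  simp [klDiv, h_int] at h

end LogLikelihoodRatio

section UniformMixture

variable {Ω ι : Type*} [MeasurableSpace Ω] [Fintype ι] (q : ι → Measure Ω)

noncomputable def uniformMixture : Measure Ω := (Fintype.card ι : ℝ≥0∞)⁻¹ • ∑ i, q i

lemma le_card_smul_uniformMixture (i : ι) :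
    q i ≤ (Fintype.card ι : ℝ≥0∞) • uniformMixture q := by
  have : Nonempty ι := ⟨i⟩
  rw [uniformMixture, smul_smul, ENNReal.mul_inv_cancel (by simp) (by simp), one_smul]
  exact Finset.single_le_sum (f := q) (fun _ _ ↦ Measure.zero_le _) (Finset.mem_univ i)

instance [Nonempty ι] [∀ i, IsProbabilityMeasure (q i)] :
    IsProbabilityMeasure (uniformMixture q) := by
  constructor
  simp [uniformMixture, ENNReal.inv_mul_cancel]

lemma uniformMixture_absolutelyContinuous {p : Measure Ω} (h : ∀ i, q i ≪ p) :
    uniformMixture q ≪ p :=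
  (Measure.sum_fintype q ▸ Measure.absolutelyContinuous_sum_left h).smul_left _

variable {q}

lemma integrable_uniformMixture [Nonempty ι] {f : Ω → ℝ} (hf : ∀ i, Integrable f (q i)) :
    Integrable f (uniformMixture q) :=
  (integrable_finsetSum_measure.mpr fun i _ ↦ hf i).smul_measure (by simp)

lemma integral_uniformMixture {f : Ω → ℝ} (hf : ∀ i, Integrable f (q i)) :
    ∫ x, f x ∂uniformMixture q = (Fintype.card ι : ℝ)⁻¹ * ∑ i, ∫ x, f x ∂q i := by
  rw [uniformMixture, integral_smul_measure, integral_finsetSum_measure fun i _ ↦ hf i]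
  simp

theorem inv_card_mul_sum_klDiv_eq [Nonempty ι] (p : Measure Ω)
    [∀ i, IsProbabilityMeasure (q i)] [IsProbabilityMeasure p]
    (hfin : ∀ i, klDiv (q i) p < ∞) :
    (Fintype.card ι : ℝ≥0∞)⁻¹ * ∑ i, klDiv (q i) p =
      klDiv (uniformMixture q) p +
        (Fintype.card ι : ℝ≥0∞)⁻¹ * ∑ i, klDiv (q i) (uniformMixture q) := by
  have hqp i := absolutelyContinuous_of_klDiv_lt_top (hfin i)
  have hqp_int i := integrable_llr_of_klDiv_lt_top (hfin i)
  have hqQ i := Measure.absolutelyContinuous_of_le_smul (le_card_smul_uniformMixture q i)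
  have hqQ_int i := integrable_llr_of_le_smul (le_card_smul_uniformMixture q i) (by simp)
  have hQp : uniformMixture q ≪ p := uniformMixture_absolutelyContinuous q hqp
  have hQp_int i := integrable_llr_of_chain (hqQ i) hQp (hqp_int i) (hqQ_int i)
  have hQp_int' : Integrable (llr (uniformMixture q) p) (uniformMixture q) :=
    integrable_uniformMixture hQp_int
  have hsplit i := integral_llr_chain (hqQ i) hQp (hqQ_int i) (hQp_int i)
  have havg : ∫ x, llr (uniformMixture q) p x ∂uniformMixture q =
      (Fintype.card ι : ℝ)⁻¹ * ∑ i, ∫ x, llr (uniformMixture q) p x ∂q i :=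
    integral_uniformMixture hQp_int
  have hqp_nonneg i := integral_llr_nonneg (hqp i) (hqp_int i)
  have hqQ_nonneg i := integral_llr_nonneg (hqQ i) (hqQ_int i)
  have hinv : (Fintype.card ι : ℝ≥0∞)⁻¹ = ENNReal.ofReal (Fintype.card ι : ℝ)⁻¹ := by
    rw [ENNReal.ofReal_inv_of_pos (by positivity), ENNReal.ofReal_natCast]
  have hr : (0 : ℝ) ≤ (Fintype.card ι : ℝ)⁻¹ := by positivity
  simp only [klDiv_of_ac_of_integrable (hqp _) (hqp_int _),
    klDiv_of_ac_of_integrable (hqQ _) (hqQ_int _), klDiv_of_ac_of_integrable hQp hQp_int']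
  rw [hinv, ← ENNReal.ofReal_sum_of_nonneg fun i _ ↦ hqp_nonneg i,
    ← ENNReal.ofReal_sum_of_nonneg fun i _ ↦ hqQ_nonneg i, ← ENNReal.ofReal_mul hr,
    ← ENNReal.ofReal_mul hr, ← ENNReal.ofReal_add (integral_llr_nonneg hQp hQp_int')
      (mul_nonneg hr (Finset.sum_nonneg fun i _ ↦ hqQ_nonneg i)),
    havg, Finset.sum_congr rfl fun i _ ↦ hsplit i, Finset.sum_add_distrib]
  ring_nf

end UniformMixture

theorem avg_klDiv_decomposition_general {Ω : Type*} [MeasurableSpace Ω]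
    (N : ℕ) (hN : 0 < N) (q : Fin N → Measure Ω) (p : Measure Ω)
    [∀ i, IsProbabilityMeasure (q i)] [IsProbabilityMeasure p]
    (hfin : ∀ i, klDiv (q i) p < ⊤) :
    (N : ℝ≥0∞)⁻¹ * ∑ i, klDiv (q i) p =
      klDiv ((N : ℝ≥0∞)⁻¹ • ∑ i, q i) p +
        (N : ℝ≥0∞)⁻¹ * ∑ i, klDiv (q i) ((N : ℝ≥0∞)⁻¹ • ∑ j, q j) := by
  have : Nonempty (Fin N) := ⟨⟨0, hN⟩⟩
  simpa [uniformMixture] using inv_card_mul_sum_klDiv_eq p hfin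

/-- **Index-code / ELBO decomposition (Hoffman–Johnson).**
For probability measures q₁,…,q_N ≪ p with finite KL to p, and
q_avg = (1/N)·Σᵢ qᵢ:
(1/N)·Σᵢ KL(qᵢ‖p) = KL(q_avg‖p) + (1/N)·Σᵢ KL(qᵢ‖q_avg). -/
theorem avg_klDiv_decomposition {Ω : Type*} [MeasurableSpace Ω]
    (N : ℕ) (hN : 0 < N) (q : Fin N → Measure Ω) (p : Measure Ω)
    [∀ i, IsProbabilityMeasure (q i)] [IsProbabilityMeasure p]
    (habs : ∀ i, q i ≪ p) (hfin : ∀ i, klDiv (q i) p < ⊤) :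
    (N : ℝ≥0∞)⁻¹ * ∑ i, klDiv (q i) p =
      klDiv ((N : ℝ≥0∞)⁻¹ • ∑ i, q i) p +
        (N : ℝ≥0∞)⁻¹ * ∑ i, klDiv (q i) ((N : ℝ≥0∞)⁻¹ • ∑ j, q j) :=
  avg_klDiv_decomposition_general N hN q p hfin
end

section
/- Let μ : ℝᵈ → ℝⁿ be L-Lipschitz (L > 0) with respect to the Euclidean norms, and define log p(x|z) = −(n/2)·log(2π) − (1/2)·‖x − μ(z)‖². Let R_x, R_Z > 0 and suppose z, z₁, z₂ ∈ ℝᵈ satisfy ‖z‖ ≤ R_Z, ‖z₁‖ ≤ R_Z, ‖z₂‖ ≤ R_Z, and x₁, x₂ ∈ ℝⁿ satisfy ‖x₁ − μ(z₁)‖ ≤ R_x and ‖x₂ − μ(z₂)‖ ≤ R_x. Then |log p(x₁|z) − log p(x₂|z)| ≤ (R_x + 2·L·R_Z)·‖x₁ − x₂‖. -/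
open scoped NNReal
/-- **Bounded log-likelihood lemma for a Lipschitz decoder.**
Let μ : ℝᵈ → ℝⁿ be L-Lipschitz and log p(x|z) = −(n/2)·log(2π) − ½‖x − μ(z)‖².
If z, z₁, z₂ lie in the ball of radius R_Z and ‖xᵢ − μ(zᵢ)‖ ≤ R_x for i = 1,2,
then |log p(x₁|z) − log p(x₂|z)| ≤ (R_x + 2·L·R_Z)·‖x₁ − x₂‖. -/
theorem bounded_log_likelihood {d n : ℕ}
    (μ : EuclideanSpace ℝ (Fin d) → EuclideanSpace ℝ (Fin n))
    (L : ℝ≥0) (hL : 0 < L) (hLip : LipschitzWith L μ)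
    (Rx RZ : ℝ) (hRx : 0 < Rx) (hRZ : 0 < RZ)
    (z z₁ z₂ : EuclideanSpace ℝ (Fin d))
    (hz : ‖z‖ ≤ RZ) (hz₁ : ‖z₁‖ ≤ RZ) (hz₂ : ‖z₂‖ ≤ RZ)
    (x₁ x₂ : EuclideanSpace ℝ (Fin n))
    (hx₁ : ‖x₁ - μ z₁‖ ≤ Rx) (hx₂ : ‖x₂ - μ z₂‖ ≤ Rx)
    (logp : EuclideanSpace ℝ (Fin n) → EuclideanSpace ℝ (Fin d) → ℝ)
    (hlogp : ∀ x z, logp x z =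
      -((n : ℝ) / 2) * Real.log (2 * Real.pi) - (1 / 2 : ℝ) * ‖x - μ z‖ ^ 2) :
    |logp x₁ z - logp x₂ z| ≤ (Rx + 2 * (L : ℝ) * RZ) * ‖x₁ - x₂‖ := by
  set a := x₁ - μ z
  set b := x₂ - μ z
  have hab : a - b = x₁ - x₂ := by simp [a, b]
  -- bounds on ‖a‖ and ‖b‖
  have hμ1 : ‖μ z₁ - μ z‖ ≤ 2 * (L : ℝ) * RZ := by
    have := hLip.dist_le_mul z₁ z
    rw [dist_eq_norm] at this
    have hzz : ‖z₁ - z‖ ≤ 2 * RZ := by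
      calc ‖z₁ - z‖ ≤ ‖z₁‖ + ‖z‖ := norm_sub_le _ _
        _ ≤ 2 * RZ := by linarith
    calc ‖μ z₁ - μ z‖ ≤ (L : ℝ) * ‖z₁ - z‖ := this
      _ ≤ (L : ℝ) * (2 * RZ) := by
          exact mul_le_mul_of_nonneg_left hzz L.coe_nonneg
      _ = 2 * (L : ℝ) * RZ := by ring
  have hμ2 : ‖μ z₂ - μ z‖ ≤ 2 * (L : ℝ) * RZ := by
    have := hLip.dist_le_mul z₂ z
    rw [dist_eq_norm] at this
    have hzz : ‖z₂ - z‖ ≤ 2 * RZ := by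
      calc ‖z₂ - z‖ ≤ ‖z₂‖ + ‖z‖ := norm_sub_le _ _
        _ ≤ 2 * RZ := by linarith
    calc ‖μ z₂ - μ z‖ ≤ (L : ℝ) * ‖z₂ - z‖ := this
      _ ≤ (L : ℝ) * (2 * RZ) := by
          exact mul_le_mul_of_nonneg_left hzz L.coe_nonneg
      _ = 2 * (L : ℝ) * RZ := by ring
  have ha : ‖a‖ ≤ Rx + 2 * (L : ℝ) * RZ := by
    have : a = (x₁ - μ z₁) + (μ z₁ - μ z) := by simp [a]
    rw [this]
    calc ‖(x₁ - μ z₁) + (μ z₁ - μ z)‖ ≤ ‖x₁ - μ z₁‖ + ‖μ z₁ - μ z‖ := norm_add_le _ _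
      _ ≤ Rx + 2 * (L : ℝ) * RZ := add_le_add hx₁ hμ1
  have hb : ‖b‖ ≤ Rx + 2 * (L : ℝ) * RZ := by
    have : b = (x₂ - μ z₂) + (μ z₂ - μ z) := by simp [b]
    rw [this]
    calc ‖(x₂ - μ z₂) + (μ z₂ - μ z)‖ ≤ ‖x₂ - μ z₂‖ + ‖μ z₂ - μ z‖ := norm_add_le _ _
      _ ≤ Rx + 2 * (L : ℝ) * RZ := add_le_add hx₂ hμ2
  have key : |logp x₁ z - logp x₂ z| = (1/2) * |‖a‖ ^ 2 - ‖b‖ ^ 2| := by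
    rw [hlogp, hlogp]
    rw [show -((n : ℝ) / 2) * Real.log (2 * Real.pi) - (1 / 2 : ℝ) * ‖a‖ ^ 2 -
        (-((n : ℝ) / 2) * Real.log (2 * Real.pi) - (1 / 2 : ℝ) * ‖b‖ ^ 2)
        = -(1/2) * (‖a‖ ^ 2 - ‖b‖ ^ 2) by ring]
    rw [abs_mul]
    norm_num
  rw [key]
  have hdiff : |‖a‖ - ‖b‖| ≤ ‖x₁ - x₂‖ := by
    rw [← hab]; exact abs_norm_sub_norm_le a b
  have hsum : ‖a‖ + ‖b‖ ≤ 2 * (Rx + 2 * (L : ℝ) * RZ) := by linarith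
  calc (1/2) * |‖a‖ ^ 2 - ‖b‖ ^ 2|
      = (1/2) * (|‖a‖ - ‖b‖| * (‖a‖ + ‖b‖)) := by
        rw [show ‖a‖ ^ 2 - ‖b‖ ^ 2 = (‖a‖ - ‖b‖) * (‖a‖ + ‖b‖) by ring, abs_mul,
          abs_of_nonneg (by positivity : (0:ℝ) ≤ ‖a‖ + ‖b‖)]
    _ ≤ (1/2) * (‖x₁ - x₂‖ * (2 * (Rx + 2 * (L : ℝ) * RZ))) := by
        have h1 : (0:ℝ) ≤ ‖a‖ + ‖b‖ := by positivity
        have := mul_le_mul hdiff hsum h1 (norm_nonneg _)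
        linarith
    _ = (Rx + 2 * (L : ℝ) * RZ) * ‖x₁ - x₂‖ := by ring
end

section
/- Let p be a probability measure on a measurable space Z, let C ≥ 0, and let f₁, f₂ : Z → (0,∞) be measurable functions with 0 < ∫ fᵢ dp < ∞ for i = 1, 2 and |log f₁(z) − log f₂(z)| ≤ C for all z ∈ Z. Define the posterior measures Qᵢ(B) = (∫_B fᵢ dp)/(∫_Z fᵢ dp) for measurable B ⊆ Z. Then for every measurable set B ⊆ Z, Q₁(B) ≤ e^{2C}·Q₂(B), i.e. the map from a data point x (with likelihood f_x) to a sample from its Bayesian posterior is ε-differentially private with ε = 2C. -/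
open MeasureTheory

/-- **Posterior lemma: posterior sampling under a bounded log-likelihood is
2C-differentially private.** If |log f₁(z) − log f₂(z)| ≤ C for all z, then
the Bayesian posteriors Qᵢ(B) = (∫_B fᵢ dp)/(∫ fᵢ dp) satisfy
Q₁(B) ≤ e^{2C}·Q₂(B) for every measurable B. -/
theorem posterior_sampling_dp {Z : Type*} [MeasurableSpace Z]
    (p : Measure Z) [IsProbabilityMeasure p] (C : ℝ) (hC : 0 ≤ C)
    (f₁ f₂ : Z → ℝ) (hf₁m : Measurable f₁) (hf₂m : Measurable f₂)
    (hf₁pos : ∀ z, 0 < f₁ z) (hf₂pos : ∀ z, 0 < f₂ z)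
    (hf₁int : Integrable f₁ p) (hf₂int : Integrable f₂ p)
    (hi₁ : 0 < ∫ z, f₁ z ∂p) (hi₂ : 0 < ∫ z, f₂ z ∂p)
    (hlog : ∀ z, |Real.log (f₁ z) - Real.log (f₂ z)| ≤ C) :
    ∀ B : Set Z, MeasurableSet B →
      (∫ z in B, f₁ z ∂p) / (∫ z, f₁ z ∂p) ≤
        Real.exp (2 * C) * ((∫ z in B, f₂ z ∂p) / (∫ z, f₂ z ∂p)) := by
  intro B hB
  have h12 : ∀ z, f₁ z ≤ Real.exp C * f₂ z := by
    intro z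
    have h := (abs_le.mp (hlog z)).2
    have : Real.log (f₁ z) ≤ C + Real.log (f₂ z) := by linarith
    calc f₁ z = Real.exp (Real.log (f₁ z)) := (Real.exp_log (hf₁pos z)).symm
      _ ≤ Real.exp (C + Real.log (f₂ z)) := Real.exp_le_exp.mpr this
      _ = Real.exp C * f₂ z := by rw [Real.exp_add, Real.exp_log (hf₂pos z)]
  have h21 : ∀ z, f₂ z ≤ Real.exp C * f₁ z := by
    intro z
    have h := (abs_le.mp (hlog z)).1
    have : Real.log (f₂ z) ≤ C + Real.log (f₁ z) := by linarith
    calc f₂ z = Real.exp (Real.log (f₂ z)) := (Real.exp_log (hf₂pos z)).symm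
      _ ≤ Real.exp (C + Real.log (f₁ z)) := Real.exp_le_exp.mpr this
      _ = Real.exp C * f₁ z := by rw [Real.exp_add, Real.exp_log (hf₁pos z)]
  have hIB : (∫ z in B, f₁ z ∂p) ≤ Real.exp C * ∫ z in B, f₂ z ∂p := by
    rw [← integral_const_mul]
    exact integral_mono (hf₁int.restrict) ((hf₂int.restrict).const_mul _)
      (fun z => h12 z)
  have hI : (∫ z, f₂ z ∂p) ≤ Real.exp C * ∫ z, f₁ z ∂p := by
    rw [← integral_const_mul]
    exact integral_mono hf₂int (hf₁int.const_mul _) (fun z => h21 z)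
  have hBnn : 0 ≤ ∫ z in B, f₂ z ∂p :=
    integral_nonneg (fun z => (hf₂pos z).le)
  have key : (∫ z in B, f₁ z ∂p) * (∫ z, f₂ z ∂p) ≤
      Real.exp (2 * C) * (∫ z in B, f₂ z ∂p) * (∫ z, f₁ z ∂p) := by
    have h1 : (∫ z in B, f₁ z ∂p) * (∫ z, f₂ z ∂p) ≤
        (Real.exp C * ∫ z in B, f₂ z ∂p) * (Real.exp C * ∫ z, f₁ z ∂p) := by
      apply mul_le_mul hIB hI hi₂.le
      positivity
    calc (∫ z in B, f₁ z ∂p) * (∫ z, f₂ z ∂p)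
        ≤ (Real.exp C * ∫ z in B, f₂ z ∂p) * (Real.exp C * ∫ z, f₁ z ∂p) := h1
      _ = Real.exp (2 * C) * (∫ z in B, f₂ z ∂p) * (∫ z, f₁ z ∂p) := by
          rw [two_mul, Real.exp_add]; ring
  calc (∫ z in B, f₁ z ∂p) / (∫ z, f₁ z ∂p)
      ≤ ((∫ z in B, f₁ z ∂p) * (∫ z, f₂ z ∂p)) / ((∫ z, f₁ z ∂p) * (∫ z, f₂ z ∂p)) := by
        rw [mul_div_mul_right _ _ (ne_of_gt hi₂)]
    _ ≤ (Real.exp (2 * C) * (∫ z in B, f₂ z ∂p) * (∫ z, f₁ z ∂p)) /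
        ((∫ z, f₁ z ∂p) * (∫ z, f₂ z ∂p)) := by
        apply div_le_div_of_nonneg_right key (by positivity) |>.trans_eq rfl
    _ = Real.exp (2 * C) * ((∫ z in B, f₂ z ∂p) / (∫ z, f₂ z ∂p)) := by
        field_simp
end

section
/- Let p be a probability measure on ℝᵈ with p({z : ‖z‖ ≤ R_Z}) = 1 for some R_Z > 0, let μ : ℝᵈ → ℝⁿ be L-Lipschitz (L > 0), and for x ∈ ℝⁿ define f_x(z) = exp(−(1/2)·‖x − μ(z)‖²) and the posterior measure Q_x(B) = (∫_B f_x dp)/(∫ f_x dp). Let z₁, z₂ ∈ ℝᵈ with ‖z₁‖ ≤ R_Z, ‖z₂‖ ≤ R_Z, and set x₁ = μ(z₁), x₂ = μ(z₂). Then for every measurable B ⊆ ℝᵈ, Q_{x₁}(B) ≤ e^{8·L²·R_Z²}·Q_{x₂}(B). -/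
open MeasureTheory Real
open scoped NNReal

/-!
On the ball of radius `R` an `L`-Lipschitz decoder moves points by at most `2LR`, so the
Gaussian likelihoods `f_x = exp (-‖x - μ ·‖² / 2)` of two reconstructions `x = μ z₁`, `μ z₂`
differ there by a factor at most `e^C`, `C = 4L²R²`. Integrating these pointwise bounds against
the prior bounds the numerator and the normaliser of the posterior, giving the factor `e^{2C}`.
-/

section Posterior

variable {α : Type*} [MeasurableSpace α] {p : Measure α}

theorem integral_le_mul_integral_of_ae_le {g h : α → ℝ} {c : ℝ} (hg : Integrable g p)
    (hh : Integrable h p) (hle : ∀ᵐ z ∂p, g z ≤ c * h z) :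
    ∫ z, g z ∂p ≤ c * ∫ z, h z ∂p :=
  integral_const_mul c h ▸ integral_mono_ae hg (hh.const_mul c) hle

theorem setIntegral_div_integral_le_exp_mul {g₁ g₂ : α → ℝ} {C : ℝ}
    (hg₁ : Integrable g₁ p) (hg₂ : Integrable g₂ p) (hg₂_nonneg : 0 ≤ᵐ[p] g₂)
    (h₁₂ : ∀ᵐ z ∂p, g₁ z ≤ exp C * g₂ z) (h₂₁ : ∀ᵐ z ∂p, g₂ z ≤ exp C * g₁ z) (B : Set α) :
    (∫ z in B, g₁ z ∂p) / (∫ z, g₁ z ∂p) ≤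
      exp (2 * C) * ((∫ z in B, g₂ z ∂p) / ∫ z, g₂ z ∂p) := by
  have hg₁_nonneg : 0 ≤ᵐ[p] g₁ := by
    filter_upwards [hg₂_nonneg, h₂₁] with z h₂ h₂₁
    exact nonneg_of_mul_nonneg_right (h₂.trans h₂₁) (exp_pos C)
  have hJ₁ : 0 ≤ ∫ z in B, g₁ z ∂p := integral_nonneg_of_ae (ae_restrict_of_ae hg₁_nonneg)
  have hJ₂ : 0 ≤ ∫ z in B, g₂ z ∂p := integral_nonneg_of_ae (ae_restrict_of_ae hg₂_nonneg)
  have hI₂ : 0 ≤ ∫ z, g₂ z ∂p := integral_nonneg_of_ae hg₂_nonneg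
  have hJ : ∫ z in B, g₁ z ∂p ≤ exp C * ∫ z in B, g₂ z ∂p :=
    integral_le_mul_integral_of_ae_le hg₁.restrict hg₂.restrict (ae_restrict_of_ae h₁₂)
  have hI₁₂ : ∫ z, g₁ z ∂p ≤ exp C * ∫ z, g₂ z ∂p :=
    integral_le_mul_integral_of_ae_le hg₁ hg₂ h₁₂
  have hI₂₁ : ∫ z, g₂ z ∂p ≤ exp C * ∫ z, g₁ z ∂p :=
    integral_le_mul_integral_of_ae_le hg₂ hg₁ h₂₁
  rcases (integral_nonneg_of_ae hg₁_nonneg).eq_or_lt with hI₁ | hI₁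
  · rw [← hI₁, div_zero]
    exact mul_nonneg (exp_pos _).le (div_nonneg hJ₂ hI₂)
  have hI₂_pos : 0 < ∫ z, g₂ z ∂p := pos_of_mul_pos_right (hI₁.trans_le hI₁₂) (exp_pos C).le
  rw [mul_div_assoc', div_le_div_iff₀ hI₁ hI₂_pos, two_mul, exp_add]
  calc (∫ z in B, g₁ z ∂p) * ∫ z, g₂ z ∂p
      ≤ (exp C * ∫ z in B, g₂ z ∂p) * (exp C * ∫ z, g₁ z ∂p) :=
        mul_le_mul hJ hI₂₁ hI₂ (mul_nonneg (exp_pos C).le hJ₂)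
    _ = exp C * exp C * (∫ z in B, g₂ z ∂p) * ∫ z, g₁ z ∂p := by ring

end Posterior

theorem exp_neg_half_norm_sq_le_exp_mul {E : Type*} [SeminormedAddCommGroup E] {x₁ x₂ y : E}
    {C : ℝ} (h : ‖x₂ - y‖ ^ 2 ≤ 2 * C) :
    exp (-(1 / 2) * ‖x₁ - y‖ ^ 2) ≤ exp C * exp (-(1 / 2) * ‖x₂ - y‖ ^ 2) := by
  rw [← exp_add, exp_le_exp]
  nlinarith [sq_nonneg ‖x₁ - y‖]

theorem LipschitzWith.norm_sub_sq_le {E F : Type*} [SeminormedAddCommGroup E]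
    [SeminormedAddCommGroup F] {K : ℝ≥0} {f : E → F} (hf : LipschitzWith K f) {R : ℝ} {a b : E}
    (ha : ‖a‖ ≤ R) (hb : ‖b‖ ≤ R) : ‖f a - f b‖ ^ 2 ≤ 4 * K ^ 2 * R ^ 2 := by
  have h : ‖f a - f b‖ ≤ K * (2 * R) :=
    (hf.norm_sub_le a b).trans <|
      mul_le_mul_of_nonneg_left ((_root_.norm_sub_le a b).trans (by linarith)) K.coe_nonneg
  nlinarith [pow_le_pow_left₀ (norm_nonneg _) h 2]

theorem lvae_encoder_dp_general {d n : ℕ}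
    (p : Measure (EuclideanSpace ℝ (Fin d))) [IsProbabilityMeasure p]
    (RZ : ℝ)
    (hsupp : p {z : EuclideanSpace ℝ (Fin d) | ‖z‖ ≤ RZ} = 1)
    (μ : EuclideanSpace ℝ (Fin d) → EuclideanSpace ℝ (Fin n))
    (L : ℝ≥0) (hLip : LipschitzWith L μ)
    (f : EuclideanSpace ℝ (Fin n) → EuclideanSpace ℝ (Fin d) → ℝ)
    (hf : ∀ x z, f x z = Real.exp (-(1 / 2 : ℝ) * ‖x - μ z‖ ^ 2))
    (z₁ z₂ : EuclideanSpace ℝ (Fin d)) (hz₁ : ‖z₁‖ ≤ RZ) (hz₂ : ‖z₂‖ ≤ RZ)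
    (x₁ x₂ : EuclideanSpace ℝ (Fin n)) (hx₁ : x₁ = μ z₁) (hx₂ : x₂ = μ z₂) :
    ∀ B : Set (EuclideanSpace ℝ (Fin d)), MeasurableSet B →
      (∫ z in B, f x₁ z ∂p) / (∫ z, f x₁ z ∂p) ≤
        Real.exp (8 * (L : ℝ) ^ 2 * RZ ^ 2) *
          ((∫ z in B, f x₂ z ∂p) / (∫ z, f x₂ z ∂p)) := by
  intro B _
  obtain rfl : f = fun x z => exp (-(1 / 2) * ‖x - μ z‖ ^ 2) := funext fun x => funext (hf x)
  have hball : ∀ᵐ z ∂p, ‖z‖ ≤ RZ :=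
    (mem_ae_iff_prob_eq_one (measurableSet_le measurable_norm measurable_const)).2 hsupp
  have hcmp : ∀ {x y zc}, y = μ zc → ‖zc‖ ≤ RZ → ∀ᵐ z ∂p, exp (-(1 / 2) * ‖x - μ z‖ ^ 2) ≤
      exp (4 * L ^ 2 * RZ ^ 2) * exp (-(1 / 2) * ‖y - μ z‖ ^ 2) := by
    rintro x y zc rfl hzc
    filter_upwards [hball] with z hz
    refine exp_neg_half_norm_sq_le_exp_mul ((hLip.norm_sub_sq_le hzc hz).trans ?_)
    nlinarith [sq_nonneg ((L : ℝ) * RZ)]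
  have hint : ∀ x, Integrable (fun z => exp (-(1 / 2) * ‖x - μ z‖ ^ 2)) p := fun x =>
    .of_bound (by have := hLip.continuous; fun_prop) 1 <| ae_of_all _ fun z => by
      rw [norm_of_nonneg (exp_pos _).le, exp_le_one_iff]
      nlinarith [sq_nonneg ‖x - μ z‖]
  convert setIntegral_div_integral_le_exp_mul (hint x₁) (hint x₂)
    (ae_of_all _ fun z => (exp_pos _).le) (hcmp hx₂ hz₂) (hcmp hx₁ hz₁) B
    using 3
  ring

/-- **ε-DP of the encoder of a Lipschitz-constrained VAE.**
Let the latent prior p be supported in the ball of radius R_Z, let the decoder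
μ be L-Lipschitz, and define the Gaussian likelihood f_x(z) = exp(−½‖x − μ(z)‖²)
and the posterior Q_x(B) = (∫_B f_x dp)/(∫ f_x dp). For decoder reconstructions
x₁ = μ(z₁), x₂ = μ(z₂) of latent codes in the ball of radius R_Z, and every
measurable B, Q_{x₁}(B) ≤ e^{8L²R_Z²}·Q_{x₂}(B). -/
theorem lvae_encoder_dp {d n : ℕ}
    (p : Measure (EuclideanSpace ℝ (Fin d))) [IsProbabilityMeasure p]
    (RZ : ℝ) (hRZ : 0 < RZ)
    (hsupp : p {z : EuclideanSpace ℝ (Fin d) | ‖z‖ ≤ RZ} = 1)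
    (μ : EuclideanSpace ℝ (Fin d) → EuclideanSpace ℝ (Fin n))
    (L : ℝ≥0) (hL : 0 < L) (hLip : LipschitzWith L μ)
    (f : EuclideanSpace ℝ (Fin n) → EuclideanSpace ℝ (Fin d) → ℝ)
    (hf : ∀ x z, f x z = Real.exp (-(1 / 2 : ℝ) * ‖x - μ z‖ ^ 2))
    (z₁ z₂ : EuclideanSpace ℝ (Fin d)) (hz₁ : ‖z₁‖ ≤ RZ) (hz₂ : ‖z₂‖ ≤ RZ)
    (x₁ x₂ : EuclideanSpace ℝ (Fin n)) (hx₁ : x₁ = μ z₁) (hx₂ : x₂ = μ z₂) :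
    ∀ B : Set (EuclideanSpace ℝ (Fin d)), MeasurableSet B →
      (∫ z in B, f x₁ z ∂p) / (∫ z, f x₁ z ∂p) ≤
        Real.exp (8 * (L : ℝ) ^ 2 * RZ ^ 2) *
          ((∫ z in B, f x₂ z ∂p) / (∫ z, f x₂ z ∂p)) :=
  lvae_encoder_dp_general p RZ hsupp μ L hLip f hf z₁ z₂ hz₁ hz₂ x₁ x₂ hx₁ hx₂
end

section
/- Let p be a probability measure on a measurable space, ε ≥ 0, and let μ₁, …, μ_N and ν₁, …, ν_N be probability measures, each absolutely continuous with respect to p, such that (1/N)·Σᵢ KL(μᵢ‖p) ≤ ε and (1/N)·Σᵢ KL(νᵢ‖p) ≤ ε. Then for every measurable set B, |(1/N)·Σᵢ (μᵢ(B) − νᵢ(B))| ≤ 2·√ε. -/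
open MeasureTheory
open scoped ENNReal Classical

/-!
For probability measures `μ ≪ p` with density `φ = dμ/dp`, the pointwise bound
`(φ - 1)² ≤ 2 (φ + 1) klFun φ` and Cauchy–Schwarz against the weight `φ + 1`, of total mass `2`,
give `∫ |φ - 1| dp ≤ 2 √KL(μ‖p)`, hence `|μ(B) - p(B)| ≤ √KL(μ‖p)`. Averaging over `i` and
concavity of `√` bound the average deviation of the `μᵢ` (and of the `νᵢ`) from `p` by `√ε`; the
triangle inequality through `p` gives `2√ε`.
-/

open Real InformationTheory in
lemma sq_sub_one_le_two_mul_add_one_mul_klFun {x : ℝ} (hx : 0 ≤ x) :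
    (x - 1) ^ 2 ≤ 2 * (x + 1) * klFun x := by
  rw [klFun_apply]
  rcases hx.eq_or_lt with rfl | hx0
  · norm_num
  rcases le_total x 1 with hx1 | hx1
  · have hlog : (x - x⁻¹) / 2 ≤ log x := by
      rw [← sinh_log hx0]
      exact sinh_le_self_iff.2 (log_nonpos hx hx1)
    have : x * ((x - x⁻¹) / 2) ≤ x * log x := mul_le_mul_of_nonneg_left hlog hx
    have e : x * ((x - x⁻¹) / 2) = (x ^ 2 - 1) / 2 := by field_simp
    nlinarith
  · have hlog : 2 * (x - 1) / (x + 1) ≤ log x := by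
      simpa [show x - 1 + 2 = x + 1 by ring] using le_log_one_add_of_nonneg (sub_nonneg.2 hx1)
    have : x * (2 * (x - 1) / (x + 1)) ≤ x * log x := mul_le_mul_of_nonneg_left hlog hx
    have e : (x + 1) * (x * (2 * (x - 1) / (x + 1))) = 2 * x * (x - 1) := by field_simp
    nlinarith

lemma integral_sqrt_mul_sqrt_le {α : Type*} [MeasurableSpace α] {μ : Measure α} {f g : α → ℝ}
    (hf : Integrable f μ) (hg : Integrable g μ) (hf0 : 0 ≤ᵐ[μ] f) (hg0 : 0 ≤ᵐ[μ] g) :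
    ∫ x, √(f x) * √(g x) ∂μ ≤ √(∫ x, f x ∂μ) * √(∫ x, g x ∂μ) := by
  have hL2 : ∀ h : α → ℝ, Integrable h μ → 0 ≤ᵐ[μ] h →
      MemLp (fun x ↦ √(h x)) (ENNReal.ofReal 2) μ ∧ ∫ x, √(h x) ^ (2 : ℝ) ∂μ = ∫ x, h x ∂μ := by
    intro h hh hh0
    have hsq : (fun x ↦ √(h x) ^ 2) =ᵐ[μ] h := by
      filter_upwards [hh0] with x hx
      exact Real.sq_sqrt hx
    refine ⟨?_, by simpa only [Real.rpow_two] using integral_congr_ae hsq⟩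
    rw [ENNReal.ofReal_ofNat, memLp_two_iff_integrable_sq hh.aemeasurable.sqrt.aestronglyMeasurable]
    exact hh.congr hsq.symm
  obtain ⟨hfL2, hf2⟩ := hL2 f hf hf0
  obtain ⟨hgL2, hg2⟩ := hL2 g hg hg0
  have := integral_mul_le_Lp_mul_Lq_of_nonneg Real.HolderConjugate.two_two
    (ae_of_all _ fun x ↦ Real.sqrt_nonneg (f x)) (ae_of_all _ fun x ↦ Real.sqrt_nonneg (g x))
    hfL2 hgL2
  simpa only [hf2, hg2, ← Real.sqrt_eq_rpow] using this

open Finset in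
lemma inv_mul_sum_sqrt_le_sqrt_inv_mul_sum {ι : Type*} (s : Finset ι) {f : ι → ℝ}
    (hf : ∀ i, 0 ≤ f i) : (#s : ℝ)⁻¹ * ∑ i ∈ s, √(f i) ≤ √((#s : ℝ)⁻¹ * ∑ i ∈ s, f i) := by
  have hcs := Real.sum_sqrt_mul_sqrt_le s hf (g := fun _ ↦ 1) fun _ ↦ zero_le_one
  simp only [Real.sqrt_one, mul_one, sum_const, nsmul_eq_mul] at hcs
  calc (#s : ℝ)⁻¹ * ∑ i ∈ s, √(f i) ≤ (#s : ℝ)⁻¹ * (√(∑ i ∈ s, f i) * √(#s : ℝ)) := by gcongr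
    _ = √((#s : ℝ)⁻¹ * ∑ i ∈ s, f i) := by
      rcases (Nat.cast_nonneg (α := ℝ) #s).eq_or_lt with h | h
      · simp [← h]
      · rw [Real.sqrt_mul (by positivity), Real.sqrt_inv]
        field_simp
        rw [Real.sq_sqrt h.le, mul_comm]

section
variable {α : Type*} [MeasurableSpace α] {μ ν : Measure α} [IsProbabilityMeasure μ]
  [IsProbabilityMeasure ν]

open InformationTheory in
lemma integral_abs_toReal_rnDeriv_sub_one_le (h : InformationTheory.klDiv μ ν ≠ ∞) :
    ∫ x, |(μ.rnDeriv ν x).toReal - 1| ∂ν ≤ 2 * √(InformationTheory.klDiv μ ν).toReal := by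
  obtain ⟨hac, hllr⟩ := klDiv_ne_top_iff.1 h
  set φ : α → ℝ := fun x ↦ (μ.rnDeriv ν x).toReal
  have hφ0 : ∀ x, 0 ≤ φ x := fun x ↦ ENNReal.toReal_nonneg
  have hφ1_pos : ∀ x, 0 < φ x + 1 := fun x ↦ by linarith [hφ0 x]
  have hφ : Integrable φ ν := Measure.integrable_toReal_rnDeriv
  have hφ1 : Integrable (fun x ↦ φ x + 1) ν := hφ.add (integrable_const 1)
  have hφ1_int : ∫ x, φ x + 1 ∂ν = 2 := by
    rw [integral_add hφ (integrable_const 1), Measure.integral_toReal_rnDeriv hac]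
    norm_num
  have hkl : Integrable (fun x ↦ klFun (φ x)) ν := (integrable_klFun_rnDeriv_iff hac).2 hllr
  set χ : α → ℝ := fun x ↦ (φ x - 1) ^ 2 / (φ x + 1)
  have hχ0 : ∀ x, 0 ≤ χ x := fun x ↦ div_nonneg (sq_nonneg _) (hφ1_pos x).le
  have hχ_le : ∀ x, χ x ≤ 2 * klFun (φ x) := fun x ↦ by
    rw [div_le_iff₀ (hφ1_pos x), mul_right_comm]
    exact sq_sub_one_le_two_mul_add_one_mul_klFun (hφ0 x)
  have hχ : Integrable χ ν := by
    refine (hkl.const_mul 2).mono' ?_ (ae_of_all _ fun x ↦ ?_)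
    · exact (((hφ.aemeasurable.sub_const 1).pow_const 2).div hφ1.aemeasurable).aestronglyMeasurable
    · rw [Real.norm_of_nonneg (hχ0 x)]
      exact hχ_le x
  have habs : ∀ x, |φ x - 1| = √(χ x) * √(φ x + 1) := fun x ↦ by
    rw [← Real.sqrt_mul (hχ0 x), div_mul_cancel₀ _ (hφ1_pos x).ne', Real.sqrt_sq_eq_abs]
  calc ∫ x, |φ x - 1| ∂ν = ∫ x, √(χ x) * √(φ x + 1) ∂ν := by simp_rw [habs]
    _ ≤ √(∫ x, χ x ∂ν) * √(∫ x, φ x + 1 ∂ν) :=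
      integral_sqrt_mul_sqrt_le hχ hφ1 (ae_of_all _ hχ0) (ae_of_all _ fun x ↦ (hφ1_pos x).le)
    _ ≤ √(2 * (InformationTheory.klDiv μ ν).toReal) * √2 := by
      rw [hφ1_int, toReal_klDiv_eq_integral_klFun hac, ← integral_const_mul]
      exact mul_le_mul_of_nonneg_right
        (Real.sqrt_le_sqrt (integral_mono hχ (hkl.const_mul 2) hχ_le)) (Real.sqrt_nonneg 2)
    _ = 2 * √(InformationTheory.klDiv μ ν).toReal := by
      rw [Real.sqrt_mul zero_le_two, mul_right_comm, Real.mul_self_sqrt zero_le_two]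

lemma abs_measureReal_sub_le_integral_abs_toReal_rnDeriv_sub_one (hac : μ ≪ ν) {B : Set α}
    (hB : MeasurableSet B) :
    2 * |μ.real B - ν.real B| ≤ ∫ x, |(μ.rnDeriv ν x).toReal - 1| ∂ν := by
  have hφ : Integrable (fun x ↦ (μ.rnDeriv ν x).toReal - 1) ν :=
    Measure.integrable_toReal_rnDeriv.sub (integrable_const 1)
  have hdiff : ∀ S, μ.real S - ν.real S = ∫ x in S, (μ.rnDeriv ν x).toReal - 1 ∂ν := fun S ↦ by
    rw [integral_sub Measure.integrable_toReal_rnDeriv.integrableOn (integrable_const 1),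
      Measure.setIntegral_toReal_rnDeriv hac, setIntegral_const, smul_eq_mul, mul_one]
  have hcompl : μ.real Bᶜ - ν.real Bᶜ = -(μ.real B - ν.real B) := by
    rw [probReal_compl_eq_one_sub hB, probReal_compl_eq_one_sub hB]
    ring
  calc 2 * |μ.real B - ν.real B| = |μ.real B - ν.real B| + |μ.real Bᶜ - ν.real Bᶜ| := by
        rw [hcompl, abs_neg, two_mul]
    _ ≤ ∫ x in B, |(μ.rnDeriv ν x).toReal - 1| ∂ν
          + ∫ x in Bᶜ, |(μ.rnDeriv ν x).toReal - 1| ∂ν := by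
        rw [hdiff, hdiff]
        gcongr <;> exact abs_integral_le_integral_abs
    _ = ∫ x, |(μ.rnDeriv ν x).toReal - 1| ∂ν := integral_add_compl hB hφ.abs

open InformationTheory in
lemma abs_measureReal_sub_le_sqrt_toReal_klDiv (h : InformationTheory.klDiv μ ν ≠ ∞) {B : Set α}
    (hB : MeasurableSet B) : |μ.real B - ν.real B| ≤ √(InformationTheory.klDiv μ ν).toReal := by
  have := abs_measureReal_sub_le_integral_abs_toReal_rnDeriv_sub_one (klDiv_ne_top_iff.1 h).1 hB
  linarith [integral_abs_toReal_rnDeriv_sub_one_le h]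

end

-- Mathlib's `InformationTheory.klDiv` adds `ν.real univ - μ.real univ` to the integral.
lemma klDiv_eq_informationTheory_klDiv {Ω : Type*} [MeasurableSpace Ω] {μ ν : Measure Ω}
    (h : μ Set.univ = ν Set.univ) : klDiv μ ν = InformationTheory.klDiv μ ν := by
  rw [klDiv, InformationTheory.klDiv_def, measureReal_def, measureReal_def, h, add_sub_cancel_right]

open Finset

section
variable {ι : Type*} (s : Finset ι) {a : ι → ℝ≥0∞} {ε : ℝ}

lemma ne_top_of_inv_mul_sum_le_ofReal (h : (#s : ℝ≥0∞)⁻¹ * ∑ i ∈ s, a i ≤ ENNReal.ofReal ε) :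
    ∀ i ∈ s, a i ≠ ∞ := by
  refine ENNReal.sum_ne_top.1 fun htop ↦ ?_
  rw [htop, ENNReal.mul_top (ENNReal.inv_ne_zero.2 (ENNReal.natCast_ne_top _))] at h
  exact ENNReal.ofReal_ne_top (top_le_iff.1 h)

lemma sqrt_inv_mul_sum_toReal_le_sqrt (h : (#s : ℝ≥0∞)⁻¹ * ∑ i ∈ s, a i ≤ ENNReal.ofReal ε) :
    √((#s : ℝ)⁻¹ * ∑ i ∈ s, (a i).toReal) ≤ √ε := by
  have havg : (#s : ℝ)⁻¹ * ∑ i ∈ s, (a i).toReal ≤ (ENNReal.ofReal ε).toReal := by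
    rw [← ENNReal.toReal_sum (ne_top_of_inv_mul_sum_le_ofReal s h), ← ENNReal.toReal_natCast,
      ← ENNReal.toReal_inv, ← ENNReal.toReal_mul]
    exact ENNReal.toReal_mono ENNReal.ofReal_ne_top h
  refine (Real.sqrt_le_sqrt havg).trans_eq ?_
  rcases le_total 0 ε with hε | hε
  · rw [ENNReal.toReal_ofReal hε]
  · rw [ENNReal.ofReal_of_nonpos hε, ENNReal.toReal_zero, Real.sqrt_zero,
      Real.sqrt_eq_zero_of_nonpos hε]

end

lemma inv_mul_sum_abs_measureReal_sub_le_sqrt {α ι : Type*} [MeasurableSpace α] (s : Finset ι)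
    (μ : ι → Measure α) [∀ i, IsProbabilityMeasure (μ i)] (ν : Measure α) [IsProbabilityMeasure ν]
    {ε : ℝ} (h : (#s : ℝ≥0∞)⁻¹ * ∑ i ∈ s, klDiv (μ i) ν ≤ ENNReal.ofReal ε)
    {B : Set α} (hB : MeasurableSet B) :
    (#s : ℝ)⁻¹ * ∑ i ∈ s, |(μ i).real B - ν.real B| ≤ √ε := by
  have hkl : ∀ i, klDiv (μ i) ν = InformationTheory.klDiv (μ i) ν := fun i ↦
    klDiv_eq_informationTheory_klDiv (by simp)
  simp_rw [hkl] at h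
  calc (#s : ℝ)⁻¹ * ∑ i ∈ s, |(μ i).real B - ν.real B|
      ≤ (#s : ℝ)⁻¹ * ∑ i ∈ s, √(InformationTheory.klDiv (μ i) ν).toReal := by
        gcongr with i hi
        exact abs_measureReal_sub_le_sqrt_toReal_klDiv (ne_top_of_inv_mul_sum_le_ofReal s h i hi) hB
    _ ≤ √((#s : ℝ)⁻¹ * ∑ i ∈ s, (InformationTheory.klDiv (μ i) ν).toReal) :=
        inv_mul_sum_sqrt_le_sqrt_inv_mul_sum s fun _ ↦ ENNReal.toReal_nonneg
    _ ≤ √ε := sqrt_inv_mul_sum_toReal_le_sqrt s h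

theorem avg_encoder_diff_le_general {Ω : Type*} [MeasurableSpace Ω]
    (p : Measure Ω) [IsProbabilityMeasure p] (ε : ℝ)
    (N : ℕ) (μ ν : Fin N → Measure Ω)
    [∀ i, IsProbabilityMeasure (μ i)] [∀ i, IsProbabilityMeasure (ν i)]
    (hμ : (N : ℝ≥0∞)⁻¹ * ∑ i, klDiv (μ i) p ≤ ENNReal.ofReal ε)
    (hν : (N : ℝ≥0∞)⁻¹ * ∑ i, klDiv (ν i) p ≤ ENNReal.ofReal ε) :
    ∀ B : Set Ω, MeasurableSet B →
      |(N : ℝ)⁻¹ * ∑ i, ((μ i B).toReal - (ν i B).toReal)| ≤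
        2 * Real.sqrt ε := by
  intro B hB
  have hμB := inv_mul_sum_abs_measureReal_sub_le_sqrt univ μ p (by simpa using hμ) hB
  have hνB := inv_mul_sum_abs_measureReal_sub_le_sqrt univ ν p (by simpa using hν) hB
  simp only [card_univ, Fintype.card_fin] at hμB hνB
  have hN_inv : (0 : ℝ) ≤ (N : ℝ)⁻¹ := by positivity
  calc |(N : ℝ)⁻¹ * ∑ i, ((μ i).real B - (ν i).real B)|
      ≤ (N : ℝ)⁻¹ * ∑ i, (|(μ i).real B - p.real B| + |(ν i).real B - p.real B|) := by
        rw [abs_mul, abs_of_nonneg hN_inv]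
        gcongr
        refine (abs_sum_le_sum_abs _ _).trans (sum_le_sum fun i _ ↦ ?_)
        rw [abs_sub_comm ((ν i).real B)]
        exact abs_sub_le _ _ _
    _ ≤ √ε + √ε := by rw [sum_add_distrib, mul_add]; exact add_le_add hμB hνB
    _ = 2 * √ε := (two_mul _).symm

/-- **Closeness of averaged encoder outputs of two VAEs (Lemma on encoder
weights).** If two families of encoding distributions μ₁,…,μ_N and ν₁,…,ν_N
each have average KL divergence to the prior p at most ε, then for every
measurable set B: |(1/N)·Σᵢ (μᵢ(B) − νᵢ(B))| ≤ 2√ε. -/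
theorem avg_encoder_diff_le {Ω : Type*} [MeasurableSpace Ω]
    (p : Measure Ω) [IsProbabilityMeasure p] (ε : ℝ) (hε : 0 ≤ ε)
    (N : ℕ) (hN : 0 < N) (μ ν : Fin N → Measure Ω)
    [∀ i, IsProbabilityMeasure (μ i)] [∀ i, IsProbabilityMeasure (ν i)]
    (hμa : ∀ i, μ i ≪ p) (hνa : ∀ i, ν i ≪ p)
    (hμ : (N : ℝ≥0∞)⁻¹ * ∑ i, klDiv (μ i) p ≤ ENNReal.ofReal ε)
    (hν : (N : ℝ≥0∞)⁻¹ * ∑ i, klDiv (ν i) p ≤ ENNReal.ofReal ε) :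
    ∀ B : Set Ω, MeasurableSet B →
      |(N : ℝ)⁻¹ * ∑ i, ((μ i B).toReal - (ν i B).toReal)| ≤
        2 * Real.sqrt ε :=
  avg_encoder_diff_le_general p ε N μ ν hμ hν
end

section
/- Let p be a probability measure on a measurable space Z, let C ≥ 0, and let f₁, f₂ : Z → (0,∞) be measurable functions with 0 < ∫ fᵢ dp < ∞ for i = 1, 2 and |log f₁(z) − log f₂(z)| ≤ C for all z ∈ Z. Define the posterior densities (with respect to p) gᵢ(z) = fᵢ(z)/(∫ fᵢ dp). Then for all z ∈ Z, g₁(z) ≤ e^{2C}·g₂(z). -/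
open MeasureTheory

/-- **Pointwise density-ratio form of the Posterior Lemma.**
If |log f₁(z) − log f₂(z)| ≤ C for all z, then the posterior densities
gᵢ(z) = fᵢ(z)/(∫ fᵢ dp) with respect to the prior p satisfy
g₁(z) ≤ e^{2C}·g₂(z) for all z. -/
theorem posterior_density_ratio {Z : Type*} [MeasurableSpace Z]
    (p : Measure Z) [IsProbabilityMeasure p] (C : ℝ) (hC : 0 ≤ C)
    (f₁ f₂ : Z → ℝ) (hf₁m : Measurable f₁) (hf₂m : Measurable f₂)
    (hf₁pos : ∀ z, 0 < f₁ z) (hf₂pos : ∀ z, 0 < f₂ z)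
    (hf₁int : Integrable f₁ p) (hf₂int : Integrable f₂ p)
    (hi₁ : 0 < ∫ z, f₁ z ∂p) (hi₂ : 0 < ∫ z, f₂ z ∂p)
    (hlog : ∀ z, |Real.log (f₁ z) - Real.log (f₂ z)| ≤ C) :
    ∀ z, f₁ z / (∫ z', f₁ z' ∂p) ≤ Real.exp (2 * C) * (f₂ z / ∫ z', f₂ z' ∂p) := by
  -- pointwise bounds f₁ ≤ e^C f₂ and f₂ ≤ e^C f₁
  have hpt₁ : ∀ z, f₁ z ≤ Real.exp C * f₂ z := by
    intro z
    have h := (abs_le.mp (hlog z)).2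
    have : Real.log (f₁ z) ≤ C + Real.log (f₂ z) := by linarith
    calc f₁ z = Real.exp (Real.log (f₁ z)) := (Real.exp_log (hf₁pos z)).symm
      _ ≤ Real.exp (C + Real.log (f₂ z)) := Real.exp_le_exp.mpr this
      _ = Real.exp C * f₂ z := by rw [Real.exp_add, Real.exp_log (hf₂pos z)]
  have hpt₂ : ∀ z, f₂ z ≤ Real.exp C * f₁ z := by
    intro z
    have h := (abs_le.mp (hlog z)).1
    have : Real.log (f₂ z) ≤ C + Real.log (f₁ z) := by linarith
    calc f₂ z = Real.exp (Real.log (f₂ z)) := (Real.exp_log (hf₂pos z)).symm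
      _ ≤ Real.exp (C + Real.log (f₁ z)) := Real.exp_le_exp.mpr this
      _ = Real.exp C * f₁ z := by rw [Real.exp_add, Real.exp_log (hf₁pos z)]
  -- integral bound: ∫ f₂ ≤ e^C ∫ f₁
  have hint : (∫ z, f₂ z ∂p) ≤ Real.exp C * ∫ z, f₁ z ∂p := by
    calc (∫ z, f₂ z ∂p) ≤ ∫ z, Real.exp C * f₁ z ∂p :=
          integral_mono hf₂int (hf₁int.const_mul _) hpt₂
      _ = Real.exp C * ∫ z, f₁ z ∂p := integral_const_mul _ _
  intro z
  have hI₁ := hi₁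
  have hI₂ := hi₂
  rw [div_le_iff₀ hI₁]
  have hstep : f₁ z * (∫ z', f₂ z' ∂p) ≤ Real.exp (2 * C) * f₂ z * ∫ z', f₁ z' ∂p := by
    calc f₁ z * (∫ z', f₂ z' ∂p)
        ≤ (Real.exp C * f₂ z) * (Real.exp C * ∫ z', f₁ z' ∂p) := by
          have h1 : 0 ≤ ∫ z', f₂ z' ∂p := hI₂.le
          have h2 : 0 ≤ Real.exp C * f₂ z := mul_nonneg (Real.exp_pos C).le (hf₂pos z).le
          exact mul_le_mul (hpt₁ z) hint h1 h2
      _ = Real.exp (2 * C) * f₂ z * ∫ z', f₁ z' ∂p := by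
          rw [two_mul, Real.exp_add]; ring
  have : Real.exp (2 * C) * (f₂ z / ∫ z', f₂ z' ∂p) * (∫ z', f₁ z' ∂p)
      = (Real.exp (2 * C) * f₂ z * ∫ z', f₁ z' ∂p) / ∫ z', f₂ z' ∂p := by
    field_simp
  rw [this, le_div_iff₀ hI₂]
  linarith [hstep]
end
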